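/- arXiv:2309.10189 — 5 statements merged into one kernel-verified Lean document; each statement's English description precedes it below -/
import Mathlib

section
/- Let P ≥ 2, Q ≥ 2 be real numbers, let a, b, c, d, e, f be integers in [−Q, Q], and set Δ = 4ac − b² and Θ = 4acf + ebd − ae² − cd² − fb². Let N(P,Q) denote the number of integer solutions (x,y) of a·x² + b·x·y + c·y² + d·x + e·y + f = 0 with |x| ≤ P and |y| ≤ P. If a = c = 0 and Δ·Θ ≠ 0, then for every ε > 0 there is an absolute constant C depending only on ε with N(P,Q) ≤ C·(PQ)^ε. -/
open Finset in
lemma divisor_bound (ε : ℝ) (hε : 0 < ε) (hε1 : ε ≤ 1) :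
    ∃ C : ℝ, 1 ≤ C ∧ ∀ n : ℕ, ((n.divisors.card : ℝ)) ≤ C * (n : ℝ) ^ ε := by
  have hlog2 : (0:ℝ) < Real.log 2 := Real.log_pos (by norm_num)
  set L : ℝ := ε * Real.log 2 with hLdef
  have hL : 0 < L := mul_pos hε hlog2
  have hL1 : L ≤ 1 := by
    have : Real.log 2 ≤ 1 := by
      have := Real.log_le_sub_one_of_pos (x := 2) (by norm_num)
      linarith
    calc L ≤ 1 * Real.log 2 := by apply mul_le_mul_of_nonneg_right hε1 hlog2.le
    _ ≤ 1 := by linarith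
  set c0 : ℝ := 1 / L with hc0def
  have hc0 : 1 ≤ c0 := by
    rw [hc0def, le_div_iff₀ hL]; linarith
  set B : ℕ := ⌈(2:ℝ) ^ (1/ε)⌉₊ + 1 with hBdef
  refine ⟨c0 ^ B, one_le_pow₀ hc0, ?_⟩
  intro n
  rcases Nat.eq_zero_or_pos n with rfl | hn
  · simp [Real.zero_rpow hε.ne']
  have hn0 : n ≠ 0 := hn.ne'
  -- the local factor function
  set f : ℕ → ℝ := fun p => if (p:ℝ) ^ ε < 2 then c0 else 1 with hfdef
  -- per-prime inequality
  have key : ∀ p ∈ n.primeFactors,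
      ((n.factorization p + 1 : ℕ) : ℝ) ≤ f p * ((p:ℝ) ^ (n.factorization p)) ^ ε := by
    intro p hp
    have hp2 : (2:ℝ) ≤ (p:ℝ) := by
      exact_mod_cast (Nat.prime_of_mem_primeFactors hp).two_le
    set a : ℕ := n.factorization p with hadef
    have hswap : ((p:ℝ) ^ a) ^ ε = ((p:ℝ) ^ ε) ^ a := by
      rw [← Real.rpow_natCast ((p:ℝ) ^ ε) a, ← Real.rpow_natCast (p:ℝ) a,
        ← Real.rpow_mul (by linarith), ← Real.rpow_mul (by linarith), mul_comm]
    rw [hswap]; simp only [hfdef]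
    by_cases h2 : (p:ℝ) ^ ε < 2
    · rw [if_pos h2]
      have h2e : (2:ℝ) ^ ε ≤ (p:ℝ) ^ ε := Real.rpow_le_rpow (by norm_num) hp2 hε.le
      have hexp : ∀ m : ℕ, (1 + m * L : ℝ) ≤ ((2:ℝ) ^ ε) ^ m := by
        intro m
        have : ((2:ℝ) ^ ε) ^ m = Real.exp ((ε * m) * Real.log 2) := by
          rw [← Real.rpow_natCast ((2:ℝ) ^ ε) m, ← Real.rpow_mul (by norm_num),
            Real.rpow_def_of_pos (by norm_num), mul_comm ε (m:ℝ)]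
          ring_nf
        have h' : (ε * m) * Real.log 2 = m * L := by rw [hLdef]; ring
        rw [this, h']
        have := Real.add_one_le_exp ((m:ℝ) * L)
        linarith
      have h1 : ((a:ℝ) + 1) ≤ c0 * (1 + a * L) := by
        rw [hc0def]
        rw [div_mul_eq_mul_div, le_div_iff₀ hL]
        have hA : (0:ℝ) ≤ (a:ℝ) := by positivity
        nlinarith
      have h2' : c0 * (1 + a * L) ≤ c0 * ((p:ℝ) ^ ε) ^ a := by
        apply mul_le_mul_of_nonneg_left _ (by linarith)
        calc (1 + a * L : ℝ) ≤ ((2:ℝ) ^ ε) ^ a := hexp a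
        _ ≤ ((p:ℝ) ^ ε) ^ a := by
            apply pow_le_pow_left₀ (by positivity) h2e
      push_cast
      linarith
    · rw [if_neg h2, one_mul]
      push_neg at h2
      have h2a : ((a:ℝ) + 1) ≤ (2:ℝ) ^ a := by
        exact_mod_cast Nat.lt_two_pow_self (n := a)
      calc ((a + 1 : ℕ) : ℝ) = (a:ℝ) + 1 := by push_cast; ring
      _ ≤ (2:ℝ) ^ a := h2a
      _ ≤ ((p:ℝ) ^ ε) ^ a := pow_le_pow_left₀ (by norm_num) h2 a
  -- now combine
  have hτ : ((n.divisors.card : ℕ) : ℝ) =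
      ∏ p ∈ n.primeFactors, ((n.factorization p + 1 : ℕ) : ℝ) := by
    rw [Nat.card_divisors hn0]; push_cast; rfl
  have hprod : ((n:ℝ)) ^ ε = ∏ p ∈ n.primeFactors, ((p:ℝ) ^ (n.factorization p)) ^ ε := by
    rw [Real.finset_prod_rpow _ _ (fun p _ => by positivity) ε]
    congr 1
    have h := Nat.factorization_prod_pow_eq_self hn0
    calc (n:ℝ) = ((n.factorization.prod (· ^ ·) : ℕ) : ℝ) := by rw [h]
    _ = ∏ p ∈ n.primeFactors, ((p:ℝ) ^ (n.factorization p)) := by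
        rw [Nat.prod_factorization_eq_prod_primeFactors]; push_cast; rfl
  have hfbound : ∏ p ∈ n.primeFactors, f p ≤ c0 ^ B := by
    have : ∏ p ∈ n.primeFactors, f p
        = c0 ^ (n.primeFactors.filter (fun p : ℕ => (p:ℝ) ^ ε < 2)).card := by
      rw [hfdef, Finset.prod_ite, Finset.prod_const, Finset.prod_const, one_pow, mul_one]
    rw [this]
    apply pow_le_pow_right₀ hc0
    calc (n.primeFactors.filter (fun p : ℕ => (p:ℝ) ^ ε < 2)).card
        ≤ (Finset.range B).card := by
          apply Finset.card_le_card
          intro p hp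
          rw [Finset.mem_filter] at hp
          rw [Finset.mem_range, hBdef]
          have hp1 : (1:ℝ) ≤ (p:ℝ) := by
            exact_mod_cast (Nat.prime_of_mem_primeFactors hp.1).one_le
          have : (p:ℝ) ≤ (2:ℝ) ^ (1/ε) := by
            have h := Real.rpow_le_rpow (by positivity) hp.2.le (le_of_lt (by positivity : (0:ℝ) < 1/ε))
            rwa [← Real.rpow_mul (by positivity), mul_one_div, div_self hε.ne',
              Real.rpow_one] at h
          have h2 := this.trans (Nat.le_ceil _)
          have h3 : p ≤ ⌈(2:ℝ) ^ (1/ε)⌉₊ := by exact_mod_cast h2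
          omega
    _ = B := Finset.card_range B
  calc ((n.divisors.card : ℕ) : ℝ)
      = ∏ p ∈ n.primeFactors, ((n.factorization p + 1 : ℕ) : ℝ) := hτ
  _ ≤ ∏ p ∈ n.primeFactors, (f p * ((p:ℝ) ^ (n.factorization p)) ^ ε) :=
      Finset.prod_le_prod (fun p _ => by positivity) key
  _ = (∏ p ∈ n.primeFactors, f p) * ∏ p ∈ n.primeFactors, ((p:ℝ) ^ (n.factorization p)) ^ ε :=
      Finset.prod_mul_distrib
  _ ≤ c0 ^ B * (n:ℝ) ^ ε := by
      rw [← hprod]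
      apply mul_le_mul_of_nonneg_right hfbound (by positivity)

theorem quadratic_count_case_iii' (ε : ℝ) (hε : 0 < ε) (hε1 : ε ≤ 1)
    (C : ℝ) (hC : 1 ≤ C) (hdiv : ∀ n : ℕ, ((n.divisors.card : ℝ)) ≤ C * (n : ℝ) ^ (ε/2)) :
    ∀ (P Q : ℝ) (a b c d e f : ℤ), 2 ≤ P → 2 ≤ Q →
      (|a| : ℝ) ≤ Q → (|b| : ℝ) ≤ Q → (|c| : ℝ) ≤ Q →
      (|d| : ℝ) ≤ Q → (|e| : ℝ) ≤ Q → (|f| : ℝ) ≤ Q →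
      a = 0 → c = 0 →
      (4 * a * c - b ^ 2) *
        (4 * a * c * f + e * b * d - a * e ^ 2 - c * d ^ 2 - f * b ^ 2) ≠ 0 →
      (Nat.card {xy : ℤ × ℤ // (|xy.1| : ℝ) ≤ P ∧ (|xy.2| : ℝ) ≤ P ∧
          a * xy.1 ^ 2 + b * xy.1 * xy.2 + c * xy.2 ^ 2 + d * xy.1 + e * xy.2 + f = 0} : ℝ)
        ≤ (4 * C) * (P * Q) ^ ε := by
  intro P Q a b c d e f hP hQ ha hb hc hd he hf ha0 hc0 hΔΘ
  subst ha0 hc0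
  have hQ0 : (0:ℝ) < Q := by linarith
  -- extract b ≠ 0 and n ≠ 0
  have hb0 : b ≠ 0 := by
    intro h; apply hΔΘ; rw [h]; ring
  set n : ℤ := e * d - f * b with hndef
  have hn0 : n ≠ 0 := by
    intro h
    apply hΔΘ
    have : 4 * 0 * 0 * f + e * b * d - 0 * e ^ 2 - 0 * d ^ 2 - f * b ^ 2 = b * n := by
      rw [hndef]; ring
    rw [this]
    have : b * n = 0 := by rw [h]; ring
    rw [this, mul_zero]
  -- the target finset
  set T : Finset (ℕ × Bool) := n.natAbs.divisors ×ˢ (Finset.univ : Finset Bool) with hTdef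
  set Sol := {xy : ℤ × ℤ // (|xy.1| : ℝ) ≤ P ∧ (|xy.2| : ℝ) ≤ P ∧
      0 * xy.1 ^ 2 + b * xy.1 * xy.2 + 0 * xy.2 ^ 2 + d * xy.1 + e * xy.2 + f = 0} with hSdef
  have factored : ∀ s : Sol, (b * s.1.1 + e) * (b * s.1.2 + d) = n := by
    intro s
    have h := s.2.2.2
    rw [hndef]
    linear_combination b * h
  have unz : ∀ s : Sol, b * s.1.1 + e ≠ 0 := by
    intro s h
    apply hn0
    rw [← factored s, h, zero_mul]
  -- the injection
  have hcard : Nat.card Sol ≤ T.card := by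
    have : ∀ s : Sol, ((b * s.1.1 + e).natAbs, decide (0 ≤ b * s.1.1 + e)) ∈ T := by
      intro s
      rw [hTdef, Finset.mem_product]
      refine ⟨Nat.mem_divisors.mpr ⟨?_, Int.natAbs_ne_zero.mpr hn0⟩, Finset.mem_univ _⟩
      exact Int.natAbs_dvd_natAbs.mpr ⟨b * s.1.2 + d, (factored s).symm⟩
    have hinj : Function.Injective
        (fun s : Sol => (⟨((b * s.1.1 + e).natAbs, decide (0 ≤ b * s.1.1 + e)), this s⟩ :
          {t // t ∈ T})) := by
      intro s t h
      simp only [Subtype.mk.injEq, Prod.mk.injEq, decide_eq_decide] at h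
      have hu : b * s.1.1 + e = b * t.1.1 + e := by
        have h1 := h.1
        have h2 := h.2
        have h3 := unz s
        have h4 := unz t
        omega
      have hx : s.1.1 = t.1.1 := by
        have : b * s.1.1 = b * t.1.1 := by omega
        exact mul_left_cancel₀ hb0 this
      have hy : s.1.2 = t.1.2 := by
        apply mul_left_cancel₀ (unz s)
        have hs := s.2.2.2
        have ht := t.2.2.2
        rw [hu]
        have hts : (b * t.1.1 + e) * s.1.2 = -(d * t.1.1 + f) := by
          rw [← hx]; linear_combination hs
        have htt : (b * t.1.1 + e) * t.1.2 = -(d * t.1.1 + f) := by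
          linear_combination ht
        rw [hts, htt]
      exact Subtype.ext (Prod.ext hx hy)
    calc Nat.card Sol ≤ Nat.card {t // t ∈ T} := Nat.card_le_card_of_injective _ hinj
    _ = T.card := Nat.card_eq_finsetCard T
  have hTcard : (T.card : ℝ) = 2 * (n.natAbs.divisors.card : ℝ) := by
    rw [hTdef, Finset.card_product]
    simp; ring
  -- numeric bounds
  have hnQ : ((n.natAbs : ℕ) : ℝ) ≤ 2 * Q ^ 2 := by
    have : ((n.natAbs : ℕ) : ℝ) = |(n:ℝ)| := by
      rw [Nat.cast_natAbs]; push_cast; ring_nf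
    rw [this, hndef]
    push_cast
    calc |(e:ℝ) * d - f * b| ≤ |(e:ℝ) * d| + |(f:ℝ) * b| := abs_sub _ _
    _ = |(e:ℝ)| * |(d:ℝ)| + |(f:ℝ)| * |(b:ℝ)| := by rw [abs_mul, abs_mul]
    _ ≤ Q * Q + Q * Q := by
        have h1 : (0:ℝ) ≤ |(e:ℝ)| := abs_nonneg _
        have h2 : (0:ℝ) ≤ |(f:ℝ)| := abs_nonneg _
        have h3 : (0:ℝ) ≤ |(d:ℝ)| := abs_nonneg _
        have h4 : (0:ℝ) ≤ |(b:ℝ)| := abs_nonneg _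
        gcongr
    _ = 2 * Q ^ 2 := by ring
  have hrpow : ((n.natAbs : ℕ) : ℝ) ^ (ε/2) ≤ 2 * (P * Q) ^ ε := by
    have h1 : ((n.natAbs : ℕ) : ℝ) ^ (ε/2) ≤ (2 * Q ^ 2) ^ (ε/2) :=
      Real.rpow_le_rpow (by positivity) hnQ (by positivity)
    have h2 : ((2 : ℝ) * Q ^ 2) ^ (ε/2) = 2 ^ (ε/2) * (Q ^ 2) ^ (ε/2) :=
      Real.mul_rpow (by norm_num) (by positivity)
    have h3 : ((Q:ℝ) ^ 2) ^ (ε/2) = Q ^ ε := by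
      rw [← Real.rpow_natCast Q 2, ← Real.rpow_mul hQ0.le]
      congr 1
      push_cast; ring
    have h4 : (2:ℝ) ^ (ε/2) ≤ 2 := by
      calc (2:ℝ) ^ (ε/2) ≤ 2 ^ (1:ℝ) :=
        Real.rpow_le_rpow_of_exponent_le (by norm_num) (by linarith)
      _ = 2 := Real.rpow_one 2
    have h5 : Q ^ ε ≤ (P * Q) ^ ε := by
      apply Real.rpow_le_rpow hQ0.le _ hε.le
      nlinarith
    have hQe : (0:ℝ) ≤ Q ^ ε := by positivity
    calc ((n.natAbs : ℕ) : ℝ) ^ (ε/2) ≤ 2 ^ (ε/2) * (Q ^ 2) ^ (ε/2) := by rw [← h2]; exact h1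
    _ = 2 ^ (ε/2) * Q ^ ε := by rw [h3]
    _ ≤ 2 * Q ^ ε := by apply mul_le_mul_of_nonneg_right h4 hQe
    _ ≤ 2 * (P * Q) ^ ε := by linarith
  have hτ := hdiv n.natAbs
  have hPQ : (0:ℝ) ≤ (P * Q) ^ ε := by positivity
  calc (Nat.card Sol : ℝ) ≤ (T.card : ℝ) := by exact_mod_cast hcard
  _ = 2 * (n.natAbs.divisors.card : ℝ) := hTcard
  _ ≤ 2 * (C * ((n.natAbs : ℕ) : ℝ) ^ (ε/2)) := by linarith
  _ ≤ 2 * (C * (2 * (P * Q) ^ ε)) := by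
      have := mul_le_mul_of_nonneg_left hrpow (by linarith : (0:ℝ) ≤ C)
      linarith
  _ = (4 * C) * (P * Q) ^ ε := by ring


/-- **Quadratic lemma, case (iii).**
If `a = c = 0` and `Δ·Θ ≠ 0`, then the number of integer solutions `(x,y)` of
`ax² + bxy + cy² + dx + ey + f = 0` with `|x| ≤ P`, `|y| ≤ P` is `≪_ε (PQ)^ε`. -/
theorem quadratic_count_case_iii (ε : ℝ) (hε : 0 < ε) :
    ∃ K : ℝ, ∀ (P Q : ℝ) (a b c d e f : ℤ), 2 ≤ P → 2 ≤ Q →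
      (|a| : ℝ) ≤ Q → (|b| : ℝ) ≤ Q → (|c| : ℝ) ≤ Q →
      (|d| : ℝ) ≤ Q → (|e| : ℝ) ≤ Q → (|f| : ℝ) ≤ Q →
      a = 0 → c = 0 →
      (4 * a * c - b ^ 2) *
        (4 * a * c * f + e * b * d - a * e ^ 2 - c * d ^ 2 - f * b ^ 2) ≠ 0 →
      (Nat.card {xy : ℤ × ℤ // (|xy.1| : ℝ) ≤ P ∧ (|xy.2| : ℝ) ≤ P ∧
          a * xy.1 ^ 2 + b * xy.1 * xy.2 + c * xy.2 ^ 2 + d * xy.1 + e * xy.2 + f = 0} : ℝ)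
        ≤ K * (P * Q) ^ ε := by
  set ε' := min ε 1 with hε'def
  have hε' : 0 < ε' := lt_min hε one_pos
  have hε'1 : ε' ≤ 1 := min_le_right _ _
  obtain ⟨C, hC, hdiv⟩ := divisor_bound (ε'/2) (by positivity) (by linarith)
  have hdiv' : ∀ n : ℕ, ((n.divisors.card : ℝ)) ≤ C * (n : ℝ) ^ (ε'/2) := hdiv
  refine ⟨4 * C, ?_⟩
  intro P Q a b c d e f hP hQ ha hb hc hd he hf ha0 hc0 hΔΘ
  have h := quadratic_count_case_iii' ε' hε' hε'1 C hC hdiv' P Q a b c d e f hP hQ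
    ha hb hc hd he hf ha0 hc0 hΔΘ
  refine h.trans ?_
  have hmono : (P * Q) ^ ε' ≤ (P * Q) ^ ε :=
    Real.rpow_le_rpow_of_exponent_le (by nlinarith) (min_le_left _ _)
  have hC0 : (0:ℝ) ≤ 4 * C := by linarith
  exact mul_le_mul_of_nonneg_left hmono hC0
end

section
/- Let P ≥ 2, Q ≥ 2 be real numbers, let a, b, c, d, e, f be integers in [−Q, Q], and set Δ = 4ac − b² and Θ = 4acf + ebd − ae² − cd² − fb². Let N(P,Q) denote the number of integer solutions (x,y) of a·x² + b·x·y + c·y² + d·x + e·y + f = 0 with |x| ≤ P and |y| ≤ P. If (a² + c²)·Δ ≠ 0, Θ = 0, and −Δ is a perfect square, then N(P,Q) ≤ C·P for an absolute constant C. -/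
open Finset

lemma quad_roots_card_le (A B C : ℤ) (hA : A ≠ 0) (s : Finset ℤ) :
    (s.filter (fun y => A * y ^ 2 + B * y + C = 0)).card ≤ 2 := by
  by_contra h
  push_neg at h
  obtain ⟨y1, y2, y3, hy1, hy2, hy3, h12, h13, h23⟩ := Finset.two_lt_card_iff.mp h
  simp only [mem_filter] at hy1 hy2 hy3
  have k12 : (y1 - y2) * (A * (y1 + y2) + B) = 0 := by linear_combination hy1.2 - hy2.2
  have k13 : (y1 - y3) * (A * (y1 + y3) + B) = 0 := by linear_combination hy1.2 - hy3.2
  have l12 : A * (y1 + y2) + B = 0 := by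
    rcases mul_eq_zero.mp k12 with h | h
    · exact absurd (by omega) h12
    · exact h
  have l13 : A * (y1 + y3) + B = 0 := by
    rcases mul_eq_zero.mp k13 with h | h
    · exact absurd (by omega) h13
    · exact h
  have hz : A * (y2 - y3) = 0 := by linear_combination l12 - l13
  rcases mul_eq_zero.mp hz with h | h
  · exact hA h
  · exact h23 (by omega)

lemma key_count (m a b c d e f : ℤ) (hc : c ≠ 0) :
    (((Finset.Icc (-m) m) ×ˢ (Finset.Icc (-m) m)).filter
      (fun xy : ℤ × ℤ => a * xy.1 ^ 2 + b * xy.1 * xy.2 + c * xy.2 ^ 2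
        + d * xy.1 + e * xy.2 + f = 0)).card ≤ 2 * (2 * m + 1).toNat := by
  set T := ((Finset.Icc (-m) m) ×ˢ (Finset.Icc (-m) m)).filter
      (fun xy : ℤ × ℤ => a * xy.1 ^ 2 + b * xy.1 * xy.2 + c * xy.2 ^ 2
        + d * xy.1 + e * xy.2 + f = 0) with hT
  have h1 : T.card ≤ 2 * (Finset.Icc (-m) m).card := by
    apply Finset.card_le_mul_card_image_of_maps_to (f := Prod.fst)
    · intro xy hxy
      rw [hT, mem_filter, mem_product] at hxy
      exact hxy.1.1
    · intro x hx
      have hle : ((Finset.Icc (-m) m).filter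
          (fun y => c * y ^ 2 + (b * x + e) * y + (a * x ^ 2 + d * x + f) = 0)).card ≤ 2 :=
        quad_roots_card_le c (b * x + e) (a * x ^ 2 + d * x + f) hc _
      refine le_trans (Finset.card_le_card_of_injOn Prod.snd ?_ ?_) hle
      · intro xy hxy
        rw [Finset.mem_coe, mem_filter, hT, mem_filter, mem_product] at hxy
        rw [Finset.mem_coe, mem_filter]
        refine ⟨hxy.1.1.2, ?_⟩
        have hx1 : xy.1 = x := hxy.2
        have := hxy.1.2
        rw [hx1] at this
        linear_combination this
      · intro u hu v hv huv
        simp only [coe_filter, Set.mem_setOf_eq] at hu hv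
        exact Prod.ext (hu.2.trans hv.2.symm) huv
  calc T.card ≤ 2 * (Finset.Icc (-m) m).card := h1
    _ = 2 * (2 * m + 1).toNat := by rw [Int.card_Icc]; congr 1; omega

/-- **Quadratic lemma, case (iv).**
If `(a² + c²)·Δ ≠ 0`, `Θ = 0` and `-Δ` is a perfect square, then the number of integer
solutions `(x,y)` of `ax² + bxy + cy² + dx + ey + f = 0` with `|x| ≤ P`, `|y| ≤ P`
is `≪ P`. -/
theorem quadratic_count_case_iv :
    ∃ K : ℝ, ∀ (P Q : ℝ) (a b c d e f : ℤ), 2 ≤ P → 2 ≤ Q →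
      (|a| : ℝ) ≤ Q → (|b| : ℝ) ≤ Q → (|c| : ℝ) ≤ Q →
      (|d| : ℝ) ≤ Q → (|e| : ℝ) ≤ Q → (|f| : ℝ) ≤ Q →
      (a ^ 2 + c ^ 2) * (4 * a * c - b ^ 2) ≠ 0 →
      4 * a * c * f + e * b * d - a * e ^ 2 - c * d ^ 2 - f * b ^ 2 = 0 →
      (∃ m : ℤ, -(4 * a * c - b ^ 2) = m ^ 2) →
      (Nat.card {xy : ℤ × ℤ // (|xy.1| : ℝ) ≤ P ∧ (|xy.2| : ℝ) ≤ P ∧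
          a * xy.1 ^ 2 + b * xy.1 * xy.2 + c * xy.2 ^ 2 + d * xy.1 + e * xy.2 + f = 0} : ℝ)
        ≤ K * P := by
  refine ⟨5, fun P Q a b c d e f hP hQ _ _ _ _ _ _ hne _ _ => ?_⟩
  have hac : a ≠ 0 ∨ c ≠ 0 := by
    by_contra h
    push_neg at h
    exact hne (by rw [h.1, h.2]; ring)
  set m : ℤ := ⌊P⌋ with hm
  have hmP : (m : ℝ) ≤ P := Int.floor_le P
  have hm2 : (2 : ℤ) ≤ m := by
    rw [hm, Int.le_floor]; exact_mod_cast hP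
  have habs : ∀ x : ℤ, ((|x| : ℝ) ≤ P ↔ x ∈ Finset.Icc (-m) m) := by
    intro x
    rw [Finset.mem_Icc]
    constructor
    · intro h
      exact abs_le.mp (Int.le_floor.mpr (by push_cast; exact h))
    · intro h
      calc (|x| : ℝ) ≤ (m : ℝ) := by exact_mod_cast abs_le.mpr h
        _ ≤ P := hmP
  set T : Finset (ℤ × ℤ) := ((Finset.Icc (-m) m) ×ˢ (Finset.Icc (-m) m)).filter
      (fun xy : ℤ × ℤ => a * xy.1 ^ 2 + b * xy.1 * xy.2 + c * xy.2 ^ 2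
        + d * xy.1 + e * xy.2 + f = 0) with hT
  have hset : {xy : ℤ × ℤ | (|xy.1| : ℝ) ≤ P ∧ (|xy.2| : ℝ) ≤ P ∧
      a * xy.1 ^ 2 + b * xy.1 * xy.2 + c * xy.2 ^ 2 + d * xy.1 + e * xy.2 + f = 0}
      = (↑T : Set (ℤ × ℤ)) := by
    ext xy
    simp only [Set.mem_setOf_eq, hT, Finset.coe_filter, Finset.mem_product, Set.mem_setOf_eq,
      habs]
    tauto
  have hcard : Nat.card {xy : ℤ × ℤ // (|xy.1| : ℝ) ≤ P ∧ (|xy.2| : ℝ) ≤ P ∧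
      a * xy.1 ^ 2 + b * xy.1 * xy.2 + c * xy.2 ^ 2 + d * xy.1 + e * xy.2 + f = 0} = T.card := by
    calc Nat.card {xy : ℤ × ℤ // (|xy.1| : ℝ) ≤ P ∧ (|xy.2| : ℝ) ≤ P ∧
          a * xy.1 ^ 2 + b * xy.1 * xy.2 + c * xy.2 ^ 2 + d * xy.1 + e * xy.2 + f = 0}
        = ({xy : ℤ × ℤ | (|xy.1| : ℝ) ≤ P ∧ (|xy.2| : ℝ) ≤ P ∧
          a * xy.1 ^ 2 + b * xy.1 * xy.2 + c * xy.2 ^ 2 + d * xy.1 + e * xy.2 + f = 0}).ncard :=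
          (Nat.card_coe_set_eq _)
      _ = (↑T : Set (ℤ × ℤ)).ncard := by rw [hset]
      _ = T.card := Set.ncard_coe_finset T
  have hbound : T.card ≤ 2 * (2 * m + 1).toNat := by
    rcases hac with ha | hc
    · have hswap : T.card = (((Finset.Icc (-m) m) ×ˢ (Finset.Icc (-m) m)).filter
          (fun xy : ℤ × ℤ => c * xy.1 ^ 2 + b * xy.1 * xy.2 + a * xy.2 ^ 2
            + e * xy.1 + d * xy.2 + f = 0)).card := by
        apply Finset.card_bij' (fun xy _ => Prod.swap xy) (fun xy _ => Prod.swap xy)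
        · intro xy hxy
          obtain ⟨x, y⟩ := xy
          simp only [hT, Finset.mem_filter, Finset.mem_product, Prod.swap_prod_mk] at hxy ⊢
          exact ⟨⟨hxy.1.2, hxy.1.1⟩, by linear_combination hxy.2⟩
        · intro xy hxy
          obtain ⟨x, y⟩ := xy
          simp only [hT, Finset.mem_filter, Finset.mem_product, Prod.swap_prod_mk] at hxy ⊢
          exact ⟨⟨hxy.1.2, hxy.1.1⟩, by linear_combination hxy.2⟩
        · intro xy _; simp
        · intro xy _; simp
      rw [hswap]
      exact key_count m c b a e d f ha
    · exact key_count m a b c d e f hc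
  rw [hcard]
  have h1 : ((2 * m + 1).toNat : ℝ) = 2 * (m : ℝ) + 1 := by
    have : ((2 * m + 1).toNat : ℤ) = 2 * m + 1 := Int.toNat_of_nonneg (by omega)
    exact_mod_cast this
  calc (T.card : ℝ) ≤ ((2 * (2 * m + 1).toNat : ℕ) : ℝ) := by exact_mod_cast hbound
    _ = 2 * (2 * (m : ℝ) + 1) := by push_cast [h1]; ring
    _ ≤ 2 * (2 * P + 1) := by nlinarith
    _ ≤ 5 * P := by nlinarith
end

section
/- Let P ≥ 2, Q ≥ 2 be real numbers, let a, b, c, d, e, f be integers in [−Q, Q], and set Δ = 4ac − b². Let N(P,Q) denote the number of integer solutions (x,y) of a·x² + b·x·y + c·y² + d·x + e·y + f = 0 with |x| ≤ P and |y| ≤ P. If either (a ≠ 0, 2ae − bd = 0, Δ = 0, and d² − 4af is not a perfect square), or (c ≠ 0, 2cd − be = 0, Δ = 0, and e² − 4cf is not a perfect square), then N(P,Q) = 0. -/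
/-- **Quadratic lemma, case (v).**
If `a ≠ 0`, `2ae - bd = Δ = 0` and `d² - 4af` is not a perfect square, or
`c ≠ 0`, `2cd - be = Δ = 0` and `e² - 4cf` is not a perfect square, then the equation
`ax² + bxy + cy² + dx + ey + f = 0` has no integer solutions with `|x| ≤ P`, `|y| ≤ P`. -/
theorem quadratic_count_case_v (P Q : ℝ) (a b c d e f : ℤ) (hP : 2 ≤ P) (hQ : 2 ≤ Q)
    (ha : (|a| : ℝ) ≤ Q) (hb : (|b| : ℝ) ≤ Q) (hc : (|c| : ℝ) ≤ Q)
    (hd : (|d| : ℝ) ≤ Q) (he : (|e| : ℝ) ≤ Q) (hf : (|f| : ℝ) ≤ Q)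
    (hΔ : 4 * a * c - b ^ 2 = 0)
    (hcase : (a ≠ 0 ∧ 2 * a * e - b * d = 0 ∧ ¬ ∃ m : ℤ, d ^ 2 - 4 * a * f = m ^ 2) ∨
      (c ≠ 0 ∧ 2 * c * d - b * e = 0 ∧ ¬ ∃ m : ℤ, e ^ 2 - 4 * c * f = m ^ 2)) :
    Nat.card {xy : ℤ × ℤ // (|xy.1| : ℝ) ≤ P ∧ (|xy.2| : ℝ) ≤ P ∧
        a * xy.1 ^ 2 + b * xy.1 * xy.2 + c * xy.2 ^ 2 + d * xy.1 + e * xy.2 + f = 0} = 0 := by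
  rw [Nat.card_eq_zero]
  left
  constructor
  rintro ⟨⟨x, y⟩, _, _, heq⟩
  rcases hcase with ⟨ha0, h2, hns⟩ | ⟨hc0, h2, hns⟩
  · exact hns ⟨2 * a * x + b * y + d, by linear_combination -4 * a * heq + y ^ 2 * hΔ + 2 * y * h2⟩
  · exact hns ⟨2 * c * y + b * x + e, by linear_combination -4 * c * heq + x ^ 2 * hΔ + 2 * x * h2⟩
end

section
/- Let P ≥ 2, Q ≥ 2 be real numbers, let a, b, c, d, e, f be integers in [−Q, Q], and set Δ = 4ac − b². Let N(P,Q) denote the number of integer solutions (x,y) of a·x² + b·x·y + c·y² + d·x + e·y + f = 0 with |x| ≤ P and |y| ≤ P. If either (a ≠ 0, 2ae − bd = 0, Δ = 0, and d² − 4af is a perfect square), or (c ≠ 0, 2cd − be = 0, Δ = 0, and e² − 4cf is a perfect square), then N(P,Q) ≤ C·P for an absolute constant C. -/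
/-- Auxiliary: the case `a ≠ 0`. The equation is equivalent to
`(2ax + by + d)² = m²`, so for each `y` there are at most 2 values of `x`. -/
lemma quadratic_count_aux (P : ℝ) (a b c d e f : ℤ) (hP : 2 ≤ P) (ha : a ≠ 0)
    (h1 : 4 * a * c - b ^ 2 = 0) (h2 : 2 * a * e - b * d = 0) (m : ℤ)
    (h3 : d ^ 2 - 4 * a * f = m ^ 2) :
    (Nat.card {xy : ℤ × ℤ // (|xy.1| : ℝ) ≤ P ∧ (|xy.2| : ℝ) ≤ P ∧
        a * xy.1 ^ 2 + b * xy.1 * xy.2 + c * xy.2 ^ 2 + d * xy.1 + e * xy.2 + f = 0} : ℝ)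
      ≤ 5 * P := by
  set S : Finset (ℤ × ℤ) := Finset.Icc (-⌊P⌋) ⌊P⌋ ×ˢ ({m, -m} : Finset ℤ) with hS
  have hmem : ∀ s : {xy : ℤ × ℤ // (|xy.1| : ℝ) ≤ P ∧ (|xy.2| : ℝ) ≤ P ∧
        a * xy.1 ^ 2 + b * xy.1 * xy.2 + c * xy.2 ^ 2 + d * xy.1 + e * xy.2 + f = 0},
      (s.1.2, 2 * a * s.1.1 + b * s.1.2 + d) ∈ S := by
    rintro ⟨⟨x, y⟩, hx, hy, heq⟩
    simp only at hx hy heq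
    have hu : (2 * a * x + b * y + d) ^ 2 = m ^ 2 := by
      linear_combination 4 * a * heq - y ^ 2 * h1 - 2 * y * h2 + h3
    have hum : (2 * a * x + b * y + d - m) * (2 * a * x + b * y + d + m) = 0 := by
      linear_combination hu
    show (y, 2 * a * x + b * y + d) ∈ S
    rw [hS, Finset.mem_product]
    constructor
    · rw [Finset.mem_Icc]
      refine ⟨?_, Int.le_floor.mpr (le_trans (by push_cast; exact le_abs_self _) hy)⟩
      rw [neg_le]
      exact Int.le_floor.mpr (le_trans (by push_cast; exact neg_le_abs _) hy)
    · rcases mul_eq_zero.mp hum with h | h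
      · simp only [Finset.mem_insert, Finset.mem_singleton]
        left; linarith
      · simp only [Finset.mem_insert, Finset.mem_singleton]
        right; linarith
  -- the map into S is injective
  have hcard : Nat.card {xy : ℤ × ℤ // (|xy.1| : ℝ) ≤ P ∧ (|xy.2| : ℝ) ≤ P ∧
        a * xy.1 ^ 2 + b * xy.1 * xy.2 + c * xy.2 ^ 2 + d * xy.1 + e * xy.2 + f = 0}
      ≤ S.card := by
    have h := Nat.card_le_card_of_injective
      (f := fun s : {xy : ℤ × ℤ // (|xy.1| : ℝ) ≤ P ∧ (|xy.2| : ℝ) ≤ P ∧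
        a * xy.1 ^ 2 + b * xy.1 * xy.2 + c * xy.2 ^ 2 + d * xy.1 + e * xy.2 + f = 0} =>
        (⟨(s.1.2, 2 * a * s.1.1 + b * s.1.2 + d), hmem s⟩ : S))
      (by
        rintro ⟨⟨x1, y1⟩, hx1⟩ ⟨⟨x2, y2⟩, hx2⟩ h
        simp only [Subtype.mk.injEq, Prod.mk.injEq] at h
        obtain ⟨hy, hx⟩ := h
        subst hy
        have : 2 * a * x1 = 2 * a * x2 := by linarith
        have hx12 : x1 = x2 := by
          have h2a : (2 * a : ℤ) ≠ 0 := by simpa using ha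
          exact mul_left_cancel₀ h2a this
        simp [hx12])
    simpa [Nat.card_eq_finsetCard] using h
  have hfloor : (⌊P⌋ : ℝ) ≤ P := Int.floor_le P
  have hfloor2 : (2 : ℤ) ≤ ⌊P⌋ := by exact_mod_cast Int.le_floor.mpr (by exact_mod_cast hP)
  have hScard : (S.card : ℝ) ≤ (2 * P + 1) * 2 := by
    have h1'' : (Finset.Icc (-⌊P⌋) ⌊P⌋).card = (2 * ⌊P⌋ + 1).toNat := by
      rw [Int.card_Icc]; congr 1; ring
    have ht : (((2 * ⌊P⌋ + 1).toNat : ℕ) : ℤ) = 2 * ⌊P⌋ + 1 :=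
      Int.toNat_of_nonneg (by linarith)
    have htR : (((2 * ⌊P⌋ + 1).toNat : ℕ) : ℝ) = 2 * (⌊P⌋ : ℝ) + 1 := by
      exact_mod_cast ht
    have hIcc : ((Finset.Icc (-⌊P⌋) ⌊P⌋).card : ℝ) ≤ 2 * P + 1 := by
      rw [h1'', htR]; linarith
    have h2' : ({m, -m} : Finset ℤ).card ≤ 2 := by
      apply le_trans (Finset.card_insert_le _ _); simp
    have h2R : (({m, -m} : Finset ℤ).card : ℝ) ≤ 2 := by exact_mod_cast h2'
    have hprod : (S.card : ℝ)
        = ((Finset.Icc (-⌊P⌋) ⌊P⌋).card : ℝ) * (({m, -m} : Finset ℤ).card : ℝ) := by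
      rw [hS, Finset.card_product]; push_cast; ring
    rw [hprod]
    have hIccnn : (0 : ℝ) ≤ ((Finset.Icc (-⌊P⌋) ⌊P⌋).card : ℝ) := by positivity
    exact mul_le_mul hIcc h2R (by positivity) (by linarith)
  have hfin : (Nat.card {xy : ℤ × ℤ // (|xy.1| : ℝ) ≤ P ∧ (|xy.2| : ℝ) ≤ P ∧
        a * xy.1 ^ 2 + b * xy.1 * xy.2 + c * xy.2 ^ 2 + d * xy.1 + e * xy.2 + f = 0} : ℝ)
      ≤ (S.card : ℝ) := by exact_mod_cast hcard
  linarith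

/-- **Quadratic lemma, case (vii).**
If `a ≠ 0`, `2ae - bd = Δ = 0` and `d² - 4af` is a perfect square, or `c ≠ 0`,
`2cd - be = Δ = 0` and `e² - 4cf` is a perfect square, then the number of integer
solutions `(x,y)` of `ax² + bxy + cy² + dx + ey + f = 0` with `|x| ≤ P`, `|y| ≤ P`
is `≪ P`. -/
theorem quadratic_count_case_vii :
    ∃ K : ℝ, ∀ (P Q : ℝ) (a b c d e f : ℤ), 2 ≤ P → 2 ≤ Q →
      (|a| : ℝ) ≤ Q → (|b| : ℝ) ≤ Q → (|c| : ℝ) ≤ Q →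
      (|d| : ℝ) ≤ Q → (|e| : ℝ) ≤ Q → (|f| : ℝ) ≤ Q →
      4 * a * c - b ^ 2 = 0 →
      ((a ≠ 0 ∧ 2 * a * e - b * d = 0 ∧ ∃ m : ℤ, d ^ 2 - 4 * a * f = m ^ 2) ∨
        (c ≠ 0 ∧ 2 * c * d - b * e = 0 ∧ ∃ m : ℤ, e ^ 2 - 4 * c * f = m ^ 2)) →
      (Nat.card {xy : ℤ × ℤ // (|xy.1| : ℝ) ≤ P ∧ (|xy.2| : ℝ) ≤ P ∧
          a * xy.1 ^ 2 + b * xy.1 * xy.2 + c * xy.2 ^ 2 + d * xy.1 + e * xy.2 + f = 0} : ℝ)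
        ≤ K * P := by
  refine ⟨5, ?_⟩
  rintro P Q a b c d e f hP hQ _ _ _ _ _ _ hΔ (⟨ha, h2, m, h3⟩ | ⟨hc, h2, m, h3⟩)
  · exact quadratic_count_aux P a b c d e f hP ha hΔ h2 m h3
  · have hswap : Nat.card {xy : ℤ × ℤ // (|xy.1| : ℝ) ≤ P ∧ (|xy.2| : ℝ) ≤ P ∧
          a * xy.1 ^ 2 + b * xy.1 * xy.2 + c * xy.2 ^ 2 + d * xy.1 + e * xy.2 + f = 0}
        = Nat.card {xy : ℤ × ℤ // (|xy.1| : ℝ) ≤ P ∧ (|xy.2| : ℝ) ≤ P ∧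
          c * xy.1 ^ 2 + b * xy.1 * xy.2 + a * xy.2 ^ 2 + e * xy.1 + d * xy.2 + f = 0} := by
      apply Nat.card_congr
      refine (Equiv.prodComm ℤ ℤ).subtypeEquiv fun xy => ?_
      obtain ⟨x, y⟩ := xy
      simp only [Equiv.prodComm_apply, Prod.swap_prod_mk]
      constructor
      · rintro ⟨h1, h2', h3'⟩
        exact ⟨h2', h1, by linear_combination h3'⟩
      · rintro ⟨h1, h2', h3'⟩
        exact ⟨h2', h1, by linear_combination h3'⟩
    rw [hswap]
    exact quadratic_count_aux P c b a e d f hP hc (by linarith) h2 m h3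
end

section
/- Let s ≥ 3, k ∈ {3,4}, c a nonzero integer, and let 𝒞*(x₂,…,x_s) be an integral cubic form not of the shape a(b₂x₂+⋯+b_sx_s)³ for rationals a, b₂,…,b_s. Let 𝒫(x₁,…,x_s) = c·x₁^k + 𝒞*(x₂,…,x_s), and for a prime p let ρ_𝒫(p²) denote the number of x ∈ (ℤ/p²ℤ)^s with 𝒫(x) ≡ 0 (mod p²). Then there exists a constant C depending only on 𝒫 such that ρ_𝒫(p²) ≤ C·p^{2s−2} for all primes p. -/
open MvPolynomial Finset

lemma isUnit_zmod_of_not_dvd (p n : ℕ) (c : ℤ) (hp : p.Prime) (h : ¬ (p:ℤ) ∣ c) :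
    IsUnit ((c : ZMod (p^n))) := by
  have h1 : ¬ p ∣ c.natAbs := by
    intro hd
    exact h (Int.natCast_dvd_natCast.mpr hd |>.trans (Int.natAbs_dvd.mpr dvd_rfl))
  have h2 : Nat.Coprime c.natAbs (p^n) := (((Nat.Prime.coprime_iff_not_dvd hp).mpr h1).symm.pow_right n)
  have h3 : IsUnit ((c.natAbs : ZMod (p^n))) := (ZMod.isUnit_iff_coprime _ _).mpr h2
  rcases Int.natAbs_eq c with hc | hc
  · rw [hc, Int.cast_natCast]; exact h3
  · rw [hc, Int.cast_neg, Int.cast_natCast]; exact h3.neg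

lemma card_roots_filter_le {F : Type} [Field F] [Fintype F] [DecidableEq F]
    (q : Polynomial F) (hq : q ≠ 0) :
    (Finset.univ.filter fun a => q.eval a = 0).card ≤ q.natDegree := by
  refine le_trans (Finset.card_le_card fun a ha => ?_)
    ((Multiset.toFinset_card_le _).trans (Polynomial.card_roots' q))
  simp only [Finset.mem_filter] at ha
  simp [Polynomial.mem_roots, hq, ha.2]

section ZModLemmas
variable (p : ℕ)

lemma val_div_p_inj (hp : p.Prime) (y y' : ZMod (p^2))
    (hm : ((y.val : ℕ) : ZMod p) = ((y'.val : ℕ) : ZMod p))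
    (hd : y.val / p = y'.val / p) : y = y' := by
  haveI : NeZero (p^2) := ⟨pow_ne_zero _ hp.ne_zero⟩
  have hmod : y.val % p = y'.val % p := (ZMod.natCast_eq_natCast_iff _ _ _).mp hm
  have h1 := Nat.div_add_mod y.val p
  rw [hd, hmod, Nat.div_add_mod] at h1
  exact ZMod.val_injective _ h1.symm

lemma dvd_val_of_not_isUnit (hp : p.Prime) (y : ZMod (p^2)) (h : ¬ IsUnit y) : p ∣ y.val := by
  haveI : NeZero (p^2) := ⟨pow_ne_zero _ hp.ne_zero⟩
  by_contra hd
  exact h <| by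
    have : IsUnit ((y.val : ZMod (p^2))) := (ZMod.isUnit_iff_coprime _ _).mpr
      (((Nat.Prime.coprime_iff_not_dvd hp).mpr hd).symm.pow_right 2)
    rwa [ZMod.natCast_val, ZMod.cast_id] at this

lemma p_sq_eq_zero : ((p : ZMod (p^2)))^2 = 0 := by
  have := ZMod.natCast_self (p^2)
  push_cast at this
  exact this

lemma eq_p_mul_of_dvd_val (hp : p.Prime) (y : ZMod (p^2)) (h : p ∣ y.val) :
    ∃ w : ZMod (p^2), y = (p : ZMod (p^2)) * w := by
  haveI : NeZero (p^2) := ⟨pow_ne_zero _ hp.ne_zero⟩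
  obtain ⟨d, hd⟩ := h
  refine ⟨(d : ZMod (p^2)), ?_⟩
  have hy : y = ((y.val : ℕ) : ZMod (p^2)) := by rw [ZMod.natCast_val, ZMod.cast_id]
  rw [hy, hd]
  push_cast
  ring

lemma pow_eq_zero_of_not_isUnit (hp : p.Prime) (y : ZMod (p^2)) (h : ¬ IsUnit y)
    (k : ℕ) (hk : 2 ≤ k) : y ^ k = 0 := by
  obtain ⟨w, rfl⟩ := eq_p_mul_of_dvd_val p hp y (dvd_val_of_not_isUnit p hp y h)
  obtain ⟨l, rfl⟩ : ∃ l, k = 2 + l := ⟨k - 2, by omega⟩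
  rw [mul_pow, pow_add, p_sq_eq_zero]
  ring

lemma card_dvd_val_le (hp : p.Prime) [Fact p.Prime] :
    (univ.filter fun y : ZMod (p^2) => p ∣ y.val).card ≤ p := by
  have := Finset.card_le_card_of_injOn (f := fun y : ZMod (p^2) => (⟨y.val / p, by
      exact Nat.div_lt_of_lt_mul (by rw [← pow_two]; exact ZMod.val_lt y)⟩ : Fin p))
    (s := univ.filter fun y : ZMod (p^2) => p ∣ y.val) (t := univ)
    (fun a _ => mem_univ _) ?_
  · simpa using this
  · intro y hy y' hy' hff
    simp only [Finset.coe_filter, Set.mem_setOf_eq, mem_univ, true_and] at hy hy'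
    have hd : y.val / p = y'.val / p := congrArg Fin.val hff
    refine val_div_p_inj p hp y y' ?_ hd
    obtain ⟨a, ha⟩ := hy; obtain ⟨b, hb⟩ := hy'
    rw [ha, hb]
    push_cast
    simp [ZMod.natCast_self]

end ZModLemmas

section Counts
variable (p k : ℕ) [Fact p.Prime]

lemma isUnit_of_not_dvd_val (hp : p.Prime) (y : ZMod (p^2)) (h : ¬ p ∣ y.val) : IsUnit y := by
  by_contra hu
  exact h (dvd_val_of_not_isUnit p hp y hu)

lemma card_zero_solutions (hp : p.Prime) (hk : 2 ≤ k) (c : ZMod (p^2)) (hc : IsUnit c) :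
    (univ.filter fun y : ZMod (p^2) => c * y ^ k = 0).card ≤ p := by
  haveI : Fact (1 < p^2) := ⟨Nat.one_lt_pow two_ne_zero hp.one_lt⟩
  refine le_trans (Finset.card_le_card ?_) (card_dvd_val_le p hp)
  intro y hy
  simp only [Finset.mem_filter, mem_univ, true_and] at hy ⊢
  by_contra hd
  have hu : IsUnit y := isUnit_of_not_dvd_val p hp y hd
  exact (hc.mul (hu.pow k)).ne_zero hy

lemma card_unit_solutions (hp : p.Prime) (hp5 : 5 ≤ p) (hkk : k = 3 ∨ k = 4)
    (c t : ZMod (p^2)) (hc : IsUnit c) (ht : t ≠ 0) :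
    (univ.filter fun y : ZMod (p^2) => c * y ^ k = t).card ≤ k := by
  haveI : Fact (1 < p^2) := ⟨Nat.one_lt_pow two_ne_zero hp.one_lt⟩
  have hk2 : 2 ≤ k := by rcases hkk with h | h <;> omega
  set g : ZMod (p^2) →+* ZMod p := ZMod.castHom (dvd_pow_self p two_ne_zero) (ZMod p) with hg
  set q : Polynomial (ZMod p) := Polynomial.C (g c) * Polynomial.X ^ k - Polynomial.C (g t)
    with hqdef
  have hgc : g c ≠ 0 := by
    have := hc.map g
    intro h0
    rw [h0] at this
    exact this.ne_zero rfl
  have hq0 : q ≠ 0 := by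
    intro h0
    apply hgc
    have := congrArg (fun r => Polynomial.coeff r k) h0
    simp only [hqdef, Polynomial.coeff_sub, Polynomial.coeff_C_mul, Polynomial.coeff_X_pow,
      if_pos rfl, mul_one, Polynomial.coeff_C, if_neg (by omega : ¬ k = 0), sub_zero,
      Polynomial.coeff_zero] at this
    simpa using this
  have hqdeg : q.natDegree ≤ k := by
    refine le_trans (Polynomial.natDegree_sub_le _ _) ?_
    simp only [max_le_iff]
    constructor
    · exact le_trans (Polynomial.natDegree_C_mul_le _ _) (by simp)
    · simp
  refine le_trans ?_ ((card_roots_filter_le q hq0).trans hqdeg)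
  apply Finset.card_le_card_of_injOn g
  · intro y hy
    simp only [Finset.mem_coe, Finset.mem_filter, mem_univ, true_and] at hy ⊢
    have := congrArg g hy
    simp only [map_mul, map_pow] at this
    simp [hqdef, this]
  · intro y hy y' hy' hgy
    simp only [Finset.coe_filter, Set.mem_setOf_eq, mem_univ, true_and] at hy hy'
    -- y is a unit
    have hu : IsUnit y := by
      by_contra hnu
      rw [pow_eq_zero_of_not_isUnit p hp y hnu k hk2, mul_zero] at hy
      exact ht hy.symm
    -- y' = y + p * w
    have hdvd : p ∣ (y' - y).val := by
      have h0 : g (y' - y) = 0 := by rw [map_sub, hgy, sub_self]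
      have h1 : (((y' - y).val : ℕ) : ZMod p) = 0 := by
        rw [ZMod.natCast_val]
        rw [hg, ZMod.castHom_apply] at h0
        exact h0
      exact (ZMod.natCast_eq_zero_iff _ _).mp h1
    obtain ⟨w, hw⟩ := eq_p_mul_of_dvd_val p hp (y' - y) hdvd
    have hy'eq : y' = y + (p : ZMod (p^2)) * w := by rw [← hw]; ring
    have hP2 : ((p : ZMod (p^2)))^2 = 0 := p_sq_eq_zero p
    -- k is a unit
    have hku : IsUnit ((k : ℕ) : ZMod (p^2)) := by
      have hcop : Nat.Coprime k (p^2) := by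
        refine Nat.Coprime.pow_right _ ?_
        rcases hkk with h | h <;> subst h
        · exact (Nat.coprime_primes (by norm_num) hp).mpr (by omega)
        · have h2 : Nat.Coprime 2 p := (Nat.coprime_primes (by norm_num) hp).mpr (by omega)
          have h4 : (4:ℕ) = 2*2 := rfl
          rw [h4]
          exact h2.mul h2
      exact (ZMod.isUnit_iff_coprime _ _).mpr hcop
    -- expansion
    set P : ZMod (p^2) := (p : ZMod (p^2)) with hPdef
    have hexp : y' ^ k = y ^ k + P * ((k : ZMod (p^2)) * y^(k-1) * w) := by
      rcases hkk with h | h <;> subst h <;> rw [hy'eq]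
      · push_cast
        linear_combination (3*y*w^2 + P*w^3) * hP2
      · push_cast
        linear_combination (6*y^2*w^2 + 4*y*P*w^3 + P^2*w^4) * hP2
    have hzero : (c * (k : ZMod (p^2)) * y^(k-1)) * (P * w) = 0 := by
      have hcc := hy'.trans hy.symm
      rw [hexp] at hcc
      linear_combination hcc
    have hPw : P * w = 0 := by
      have huu : IsUnit (c * (k : ZMod (p^2)) * y^(k-1)) :=
        (hc.mul hku).mul (hu.pow _)
      exact (IsUnit.mul_right_eq_zero huu).mp hzero
    rw [hy'eq, hPdef, hPw, add_zero]
end Counts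

section Lift
open MvPolynomial
variable (p m : ℕ) [Fact p.Prime]

lemma fiber_card_le (hp : p.Prime) (S : Finset (Fin m → ZMod (p^2))) (z : Fin m → ZMod p) :
    (S.filter fun y => (fun i => ZMod.castHom (dvd_pow_self p two_ne_zero) (ZMod p) (y i)) = z).card
      ≤ p^m := by
  have hcard : (Fintype.card (Fin m → Fin p)) = p^m := by simp
  rw [← hcard, ← Finset.card_univ]
  apply Finset.card_le_card_of_injOn (fun y => fun i => (⟨(y i).val / p, by
      exact Nat.div_lt_of_lt_mul (by rw [← pow_two]; exact ZMod.val_lt (y i))⟩ : Fin p))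
    (fun a _ => mem_univ _)
  intro y hy y' hy' hff
  simp only [Finset.coe_filter, Set.mem_setOf_eq] at hy hy'
  funext i
  have hdiv : (y i).val / p = (y' i).val / p := congrArg Fin.val (congrFun hff i)
  refine val_div_p_inj p hp (y i) (y' i) ?_ hdiv
  have h1 : ZMod.castHom (dvd_pow_self p two_ne_zero) (ZMod p) (y i)
      = ZMod.castHom (dvd_pow_self p two_ne_zero) (ZMod p) (y' i) :=
    (congrFun hy.2 i).trans (congrFun hy'.2 i).symm
  rwa [ZMod.castHom_apply, ZMod.castHom_apply, ← ZMod.natCast_val, ← ZMod.natCast_val] at h1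

lemma lift_count (hp : p.Prime) (𝒞 : MvPolynomial (Fin m) ℤ) :
    (univ.filter fun y : Fin m → ZMod (p^2) => MvPolynomial.aeval y 𝒞 = 0).card
      ≤ p^m * (univ.filter fun z : Fin m → ZMod p =>
          MvPolynomial.eval z (MvPolynomial.map (Int.castRingHom (ZMod p)) 𝒞) = 0).card := by
  set g : ZMod (p^2) →+* ZMod p := ZMod.castHom (dvd_pow_self p two_ne_zero) (ZMod p) with hg
  set R : (Fin m → ZMod p) → Prop :=
    fun z => MvPolynomial.eval z (MvPolynomial.map (Int.castRingHom (ZMod p)) 𝒞) = 0 with hR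
  have hstep : ∀ y : Fin m → ZMod (p^2), MvPolynomial.aeval y 𝒞 = 0 → R (fun i => g (y i)) := by
    intro y hy
    have h1 : MvPolynomial.eval (fun i => g (y i)) (MvPolynomial.map (Int.castRingHom (ZMod p)) 𝒞)
        = eval₂ (Int.castRingHom (ZMod p)) (fun i => g (y i)) 𝒞 := by
      rw [MvPolynomial.eval_map]
    have h2 : g (MvPolynomial.aeval y 𝒞)
        = eval₂ (Int.castRingHom (ZMod p)) (fun i => g (y i)) 𝒞 := by
      rw [MvPolynomial.aeval_def, algebraMap_int_eq, MvPolynomial.eval₂_comp_left g]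
      congr 1
      ext n
      simp
    show MvPolynomial.eval (fun i => g (y i)) (MvPolynomial.map (Int.castRingHom (ZMod p)) 𝒞) = 0
    rw [h1, ← h2, hy, map_zero]
  classical
  have hsub : (univ.filter fun y : Fin m → ZMod (p^2) => MvPolynomial.aeval y 𝒞 = 0)
      ⊆ (univ.filter fun y : Fin m → ZMod (p^2) => R (fun i => g (y i))) := by
    intro y hy
    simp only [Finset.mem_filter, mem_univ, true_and] at hy ⊢
    exact hstep y hy
  refine le_trans (Finset.card_le_card hsub) ?_
  rw [Finset.card_eq_sum_card_fiberwise
    (f := fun y : Fin m → ZMod (p^2) => fun i => g (y i)) (t := univ) (fun y _ => mem_univ _)]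
  have hbound : ∀ z : Fin m → ZMod p,
      ((univ.filter fun y : Fin m → ZMod (p^2) => R (fun i => g (y i))).filter
        (fun y => (fun i => g (y i)) = z)).card ≤ if R z then p^m else 0 := by
    intro z
    split_ifs with hz
    · exact fiber_card_le p m hp _ z
    · rw [Nat.le_zero, Finset.card_eq_zero, Finset.eq_empty_iff_forall_notMem]
      intro y hy
      simp only [Finset.mem_filter, mem_univ, true_and] at hy
      exact hz (hy.2 ▸ hy.1)
  refine le_trans (Finset.sum_le_sum fun z _ => hbound z) ?_
  rw [Finset.sum_ite, Finset.sum_const, Finset.sum_const, smul_eq_mul, smul_eq_mul,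
    mul_zero, add_zero, mul_comm]
end Lift

lemma sz {F : Type} [Field F] [Fintype F] [DecidableEq F] (n : ℕ) :
    ∀ (P : MvPolynomial (Fin n) F), P ≠ 0 →
      (univ.filter fun x : Fin n → F => MvPolynomial.eval x P = 0).card * Fintype.card F
        ≤ P.totalDegree * Fintype.card F ^ n := by
  induction n with
  | zero =>
    intro P hP
    obtain ⟨a, rfl⟩ := MvPolynomial.C_surjective (Fin 0) P
    have ha : a ≠ 0 := fun h => hP (by rw [h, map_zero])
    have : (univ.filter fun x : Fin 0 → F => MvPolynomial.eval x (C a) = 0) = ∅ := by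
      rw [Finset.eq_empty_iff_forall_notMem]
      intro x hx
      rw [Finset.mem_filter, MvPolynomial.eval_C] at hx
      exact ha hx.2
    rw [this]
    simp
  | succ n IH =>
    intro P hP
    set q := Fintype.card F with hq
    set Q := MvPolynomial.finSuccEquiv F n P with hQdef
    have hQ : Q ≠ 0 := by
      intro h
      apply hP
      apply (MvPolynomial.finSuccEquiv F n).injective
      rw [map_zero, ← hQdef, h]
    set j := Q.natDegree with hj
    set lead := Q.coeff j with hlead
    have hlead0 : lead ≠ 0 := by
      have h1 := Polynomial.leadingCoeff_ne_zero.mpr hQ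
      unfold Polynomial.leadingCoeff at h1
      rw [hlead, hj]
      exact h1
    have hdegs : lead.totalDegree + j ≤ P.totalDegree :=
      MvPolynomial.totalDegree_coeff_finSuccEquiv_add_le P j hlead0
    -- the two filters have equal card
    have hcard : (univ.filter fun x : Fin (n+1) → F => MvPolynomial.eval x P = 0).card
        = (univ.filter fun ys : (Fin n → F) × F =>
            MvPolynomial.eval (Fin.cons ys.2 ys.1) P = 0).card := by
      apply Finset.card_bij' (fun x _ => (Fin.tail x, x 0)) (fun ys _ => Fin.cons ys.2 ys.1)
      · intro x hx
        rw [Finset.mem_filter] at hx ⊢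
        refine ⟨mem_univ _, ?_⟩
        simpa [Fin.cons_self_tail] using hx.2
      · intro ys hys
        rw [Finset.mem_filter] at hys ⊢
        exact ⟨mem_univ _, hys.2⟩
      · intro x _
        simp [Fin.cons_self_tail]
      · intro ys _
        simp
    rw [hcard]
    -- fiberwise count
    rw [Finset.card_eq_sum_card_fiberwise
      (f := Prod.fst) (t := univ) (fun ys _ => mem_univ _)]
    have hfib : ∀ s : Fin n → F,
        ((univ.filter fun ys : (Fin n → F) × F =>
            MvPolynomial.eval (Fin.cons ys.2 ys.1) P = 0).filter
          fun ys => ys.1 = s).card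
        ≤ if MvPolynomial.eval s lead = 0 then q else j := by
      intro s
      have hinj : ((univ.filter fun ys : (Fin n → F) × F =>
            MvPolynomial.eval (Fin.cons ys.2 ys.1) P = 0).filter fun ys => ys.1 = s).card
          ≤ (univ.filter fun a : F =>
              Polynomial.eval a (Q.map (MvPolynomial.eval s)) = 0).card := by
        apply Finset.card_le_card_of_injOn (fun ys => ys.2)
        · intro ys hys
          simp only [Finset.mem_coe, Finset.mem_filter, mem_univ, true_and] at hys ⊢
          obtain ⟨h1, h2⟩ := hys
          subst h2
          rw [← MvPolynomial.eval_eq_eval_mv_eval']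
          exact h1
        · intro ys hys zs hzs h2
          simp only [Finset.coe_filter, Set.mem_setOf_eq, Finset.mem_filter, Finset.mem_coe,
            mem_univ, true_and] at hys hzs
          have : ys.1 = zs.1 := hys.2.trans hzs.2.symm
          exact Prod.ext this h2
      split_ifs with h0
      · refine hinj.trans (le_trans (Finset.card_filter_le _ _) ?_)
        rw [Finset.card_univ]
      · refine hinj.trans ?_
        have hR : (Q.map (MvPolynomial.eval s)) ≠ 0 := by
          intro h
          apply h0
          have := congrArg (fun r => Polynomial.coeff r j) h
          simpa [Polynomial.coeff_map, ← hlead] using this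
        exact (card_roots_filter_le _ hR).trans Polynomial.natDegree_map_le
    -- sum the bounds
    have hsum : (∑ s : Fin n → F,
        ((univ.filter fun ys : (Fin n → F) × F =>
            MvPolynomial.eval (Fin.cons ys.2 ys.1) P = 0).filter fun ys => ys.1 = s).card)
        ≤ (univ.filter fun s : Fin n → F => MvPolynomial.eval s lead = 0).card * q
          + q ^ n * j := by
      calc _ ≤ ∑ s : Fin n → F, if MvPolynomial.eval s lead = 0 then q else j :=
            Finset.sum_le_sum (fun s _ => hfib s)
        _ = (univ.filter fun s : Fin n → F => MvPolynomial.eval s lead = 0).card * q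
            + (univ.filter fun s : Fin n → F => ¬ MvPolynomial.eval s lead = 0).card * j := by
            rw [Finset.sum_ite, Finset.sum_const, Finset.sum_const, smul_eq_mul, smul_eq_mul]
        _ ≤ _ := by
            have : (univ.filter fun s : Fin n → F => ¬ MvPolynomial.eval s lead = 0).card ≤ q ^ n := by
              refine (Finset.card_filter_le _ _).trans ?_
              simp [hq, Fintype.card_fun]
            exact Nat.add_le_add le_rfl (Nat.mul_le_mul_right _ this)
    have hIH := IH lead hlead0
    refine le_trans (Nat.mul_le_mul_right _ hsum) ?_
    calc ((univ.filter fun s : Fin n → F => MvPolynomial.eval s lead = 0).card * q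
            + q ^ n * j) * q
        ≤ (lead.totalDegree * q ^ n + q ^ n * j) * q := by
            exact Nat.mul_le_mul_right _ (Nat.add_le_add hIH le_rfl)
      _ = (lead.totalDegree + j) * q ^ (n+1) := by ring
      _ ≤ P.totalDegree * q ^ (n+1) := Nat.mul_le_mul_right _ hdegs


section GoodPrime
open MvPolynomial Finset

set_option maxHeartbeats 1000000 in
lemma good_prime_count (p k m : ℕ) [Fact p.Prime] (hp : p.Prime) (hp5 : 5 ≤ p)
    (hkk : k = 3 ∨ k = 4) (c : ℤ) (hcp : ¬ (p:ℤ) ∣ c)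
    (𝒞 : MvPolynomial (Fin m) ℤ) (hC3 : 𝒞.totalDegree ≤ 3)
    (hCp : MvPolynomial.map (Int.castRingHom (ZMod p)) 𝒞 ≠ 0) :
    (univ.filter fun y : ZMod (p^2) × (Fin m → ZMod (p^2)) =>
       (c : ZMod (p^2)) * y.1 ^ k + MvPolynomial.aeval y.2 𝒞 = 0).card ≤ (k+3) * p^(2*m) := by
  classical
  have hk2 : 2 ≤ k := by rcases hkk with h|h <;> omega
  have hcu : IsUnit ((c : ZMod (p^2))) := isUnit_zmod_of_not_dvd p 2 c hp hcp
  rw [Finset.card_eq_sum_card_fiberwise (f := Prod.snd) (t := univ) (fun y _ => mem_univ _)]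
  have hbound : ∀ y₂ : Fin m → ZMod (p^2),
      ((univ.filter fun y : ZMod (p^2) × (Fin m → ZMod (p^2)) =>
         (c : ZMod (p^2)) * y.1 ^ k + MvPolynomial.aeval y.2 𝒞 = 0).filter
          fun y => y.2 = y₂).card
        ≤ if MvPolynomial.aeval y₂ 𝒞 = 0 then p else k := by
    intro y₂
    split_ifs with h0
    · refine le_trans ?_ (card_zero_solutions p k hp hk2 _ hcu)
      apply Finset.card_le_card_of_injOn (fun y => y.1)
      · intro y hy
        simp only [Finset.mem_coe, Finset.mem_filter, mem_univ, true_and] at hy ⊢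
        obtain ⟨h1, h2⟩ := hy
        rw [h2, h0, add_zero] at h1
        exact h1
      · intro y hy y' hy' h2
        simp only [Finset.coe_filter, Set.mem_setOf_eq, Finset.mem_filter, mem_univ,
          true_and] at hy hy'
        exact Prod.ext h2 (hy.2.trans hy'.2.symm)
    · refine le_trans ?_ (card_unit_solutions p k hp hp5 hkk _
        (-(MvPolynomial.aeval y₂ 𝒞)) hcu (neg_ne_zero.mpr h0))
      apply Finset.card_le_card_of_injOn (fun y => y.1)
      · intro y hy
        simp only [Finset.mem_coe, Finset.mem_filter, mem_univ, true_and] at hy ⊢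
        obtain ⟨h1, h2⟩ := hy
        rw [h2] at h1
        exact eq_neg_of_add_eq_zero_left h1
      · intro y hy y' hy' h2
        simp only [Finset.coe_filter, Set.mem_setOf_eq, Finset.mem_filter, mem_univ,
          true_and] at hy hy'
        exact Prod.ext h2 (hy.2.trans hy'.2.symm)
  refine le_trans (Finset.sum_le_sum fun y₂ _ => hbound y₂) ?_
  rw [Finset.sum_ite, Finset.sum_const, Finset.sum_const, smul_eq_mul, smul_eq_mul]
  have hN0 : (univ.filter fun y₂ : Fin m → ZMod (p^2) =>
      MvPolynomial.aeval y₂ 𝒞 = 0).card * p ≤ 3 * p^(2*m) := by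
    have h1 := lift_count p m hp 𝒞
    have h2 := sz (F := ZMod p) m (MvPolynomial.map (Int.castRingHom (ZMod p)) 𝒞) hCp
    rw [ZMod.card] at h2
    have h3 : (MvPolynomial.map (Int.castRingHom (ZMod p)) 𝒞).totalDegree ≤ 3 := by
      refine le_trans ?_ hC3
      show (MvPolynomial.map (Int.castRingHom (ZMod p)) 𝒞).support.sup (fun s => s.sum fun _ e => e)
        ≤ 𝒞.support.sup (fun s => s.sum fun _ e => e)
      exact Finset.sup_mono (MvPolynomial.support_map_subset (Int.castRingHom (ZMod p)) 𝒞)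
    calc (univ.filter fun y₂ : Fin m → ZMod (p^2) =>
          MvPolynomial.aeval y₂ 𝒞 = 0).card * p
        ≤ (p^m * (univ.filter fun z : Fin m → ZMod p =>
            MvPolynomial.eval z (MvPolynomial.map (Int.castRingHom (ZMod p)) 𝒞) = 0).card) * p :=
          Nat.mul_le_mul_right _ h1
      _ = p^m * ((univ.filter fun z : Fin m → ZMod p =>
            MvPolynomial.eval z (MvPolynomial.map (Int.castRingHom (ZMod p)) 𝒞) = 0).card * p) :=
          mul_assoc _ _ _
      _ ≤ p^m * ((MvPolynomial.map (Int.castRingHom (ZMod p)) 𝒞).totalDegree * p^m) :=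
          Nat.mul_le_mul_left _ h2
      _ ≤ p^m * (3 * p^m) :=
          Nat.mul_le_mul_left _ (Nat.mul_le_mul_right _ h3)
      _ = 3 * p^(2*m) := by rw [Nat.mul_left_comm, ← pow_add, two_mul]
  have hrest : (univ.filter fun y₂ : Fin m → ZMod (p^2) =>
      ¬ MvPolynomial.aeval y₂ 𝒞 = 0).card * k ≤ p^(2*m) * k := by
    refine Nat.mul_le_mul_right _ ?_
    refine (Finset.card_filter_le _ _).trans ?_
    rw [Finset.card_univ]
    haveI : NeZero (p^2) := ⟨pow_ne_zero _ hp.ne_zero⟩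
    rw [Fintype.card_fun, ZMod.card, Fintype.card_fin, ← pow_mul]
  calc _ ≤ 3 * p^(2*m) + p^(2*m) * k := Nat.add_le_add hN0 hrest
    _ = (k+3) * p^(2*m) := by ring

end GoodPrime

open MvPolynomial Finset in
/-- **Lemma 5, first bound.**
For `𝓟(x) = c x₁^k + 𝒞*(x₂,…,x_s)` with `k ∈ {3,4}`, `c ≠ 0` and `𝒞*` a non-degenerate
integral cubic form, one has `ρ_𝓟(p²) ≪ p^(2s-2)` for all primes `p`. -/
theorem rho_prime_sq_bound (s : ℕ) (hs : 3 ≤ s) (k : ℕ) (hk : k = 3 ∨ k = 4)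
    (c : ℤ) (hc : c ≠ 0)
    (𝒞 : MvPolynomial (Fin (s - 1)) ℤ) (hhom : 𝒞.IsHomogeneous 3)
    (hdeg : ¬ ∃ (a : ℚ) (b : Fin (s - 1) → ℚ),
      MvPolynomial.map (Int.castRingHom ℚ) 𝒞 =
        MvPolynomial.C a * (∑ i, MvPolynomial.C (b i) * MvPolynomial.X i) ^ 3) :
    ∃ K : ℝ, ∀ p : ℕ, p.Prime →
      (Nat.card {y : ZMod (p ^ 2) × (Fin (s - 1) → ZMod (p ^ 2)) //
          (c : ZMod (p ^ 2)) * y.1 ^ k + aeval y.2 𝒞 = 0} : ℝ)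
        ≤ K * (p : ℝ) ^ (2 * s - 2) := by
  classical
  have hC0 : 𝒞 ≠ 0 := by
    intro h
    exact hdeg ⟨0, fun _ => 0, by simp [h]⟩
  obtain ⟨d₀, hd₀⟩ : 𝒞.support.Nonempty := by
    rw [Finset.nonempty_iff_ne_empty]
    intro h
    exact hC0 (MvPolynomial.support_eq_empty.mp h)
  set D := MvPolynomial.coeff d₀ 𝒞 with hD
  have hD0 : D ≠ 0 := MvPolynomial.mem_support_iff.mp hd₀
  set B : ℕ := 6 * c.natAbs * D.natAbs with hB
  have hB0 : B ≠ 0 := by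
    simp only [hB]
    positivity
  refine ⟨((k:ℝ)+3) + (B:ℝ)^2, ?_⟩
  intro p hp
  haveI : Fact p.Prime := ⟨hp⟩
  haveI : NeZero (p^2) := ⟨pow_ne_zero _ hp.ne_zero⟩
  have hcardeq : (Nat.card {y : ZMod (p ^ 2) × (Fin (s - 1) → ZMod (p ^ 2)) //
          (c : ZMod (p ^ 2)) * y.1 ^ k + aeval y.2 𝒞 = 0})
      = (univ.filter fun y : ZMod (p^2) × (Fin (s-1) → ZMod (p^2)) =>
          (c : ZMod (p^2)) * y.1 ^ k + MvPolynomial.aeval y.2 𝒞 = 0).card := by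
    rw [Nat.card_eq_fintype_card, Fintype.card_subtype]
  rw [hcardeq]
  have hexp : 2*s - 2 = 2*(s-1) := by omega
  rw [hexp]
  have hKpos : (0:ℝ) ≤ (p:ℝ)^(2*(s-1)) := by positivity
  by_cases hpB : p ∣ B
  · have hple : p ≤ B := Nat.le_of_dvd (Nat.pos_of_ne_zero hB0) hpB
    have h1 : (univ.filter fun y : ZMod (p^2) × (Fin (s-1) → ZMod (p^2)) =>
          (c : ZMod (p^2)) * y.1 ^ k + MvPolynomial.aeval y.2 𝒞 = 0).card
        ≤ p^2 * p^(2*(s-1)) := by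
      refine (Finset.card_filter_le _ _).trans ?_
      rw [Finset.card_univ, Fintype.card_prod, Fintype.card_fun, Fintype.card_fin,
        ZMod.card, ← pow_mul]
    calc ((univ.filter fun y : ZMod (p^2) × (Fin (s-1) → ZMod (p^2)) =>
          (c : ZMod (p^2)) * y.1 ^ k + MvPolynomial.aeval y.2 𝒞 = 0).card : ℝ)
        ≤ ((p^2 * p^(2*(s-1)) : ℕ) : ℝ) := Nat.cast_le.mpr h1
      _ = (p:ℝ)^2 * (p:ℝ)^(2*(s-1)) := by push_cast; ring
      _ ≤ (B:ℝ)^2 * (p:ℝ)^(2*(s-1)) := by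
          have hpB' : (p:ℝ) ≤ (B:ℝ) := Nat.cast_le.mpr hple
          have h0 : (0:ℝ) ≤ (p:ℝ) := Nat.cast_nonneg p
          gcongr
      _ ≤ (((k:ℝ)+3) + (B:ℝ)^2) * (p:ℝ)^(2*(s-1)) := by
          refine mul_le_mul_of_nonneg_right ?_ hKpos
          have : (0:ℝ) ≤ (k:ℝ) + 3 := by positivity
          linarith
  · -- good prime
    have h6 : (6:ℕ) ∣ B := by
      rw [hB]
      exact Dvd.dvd.mul_right (dvd_mul_right 6 c.natAbs) _
    have hp2 : p ≠ 2 := by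
      rintro rfl
      exact hpB (dvd_trans (by norm_num) h6)
    have hp3 : p ≠ 3 := by
      rintro rfl
      exact hpB (dvd_trans (by norm_num) h6)
    have hp5 : 5 ≤ p := by
      have h2 := hp.two_le
      by_contra hlt
      push_neg at hlt
      interval_cases p
      · exact hp2 rfl
      · exact hp3 rfl
      · norm_num at hp
    have hpc : ¬ (p:ℤ) ∣ c := by
      intro hd
      apply hpB
      have h1 : p ∣ c.natAbs := by
        rw [← Int.natAbs_natCast p]
        exact Int.natAbs_dvd_natAbs.mpr hd
      rw [hB]
      exact Dvd.dvd.mul_right (Dvd.dvd.mul_left h1 6) _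
    have hCp : MvPolynomial.map (Int.castRingHom (ZMod p)) 𝒞 ≠ 0 := by
      intro h
      apply hpB
      have h1 : ((D : ℤ) : ZMod p) = 0 := by
        have := congrArg (MvPolynomial.coeff d₀) h
        simpa [MvPolynomial.coeff_map] using this
      have h2 : (p:ℤ) ∣ D := (ZMod.intCast_zmod_eq_zero_iff_dvd _ _).mp h1
      have h3 : p ∣ D.natAbs := by
        rw [← Int.natAbs_natCast p]
        exact Int.natAbs_dvd_natAbs.mpr h2
      rw [hB]
      exact Dvd.dvd.mul_left h3 _
    have hC3 : 𝒞.totalDegree ≤ 3 := hhom.totalDegree_le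
    have hmain := good_prime_count p k (s-1) hp hp5 hk c hpc 𝒞 hC3 hCp
    calc ((univ.filter fun y : ZMod (p^2) × (Fin (s-1) → ZMod (p^2)) =>
          (c : ZMod (p^2)) * y.1 ^ k + MvPolynomial.aeval y.2 𝒞 = 0).card : ℝ)
        ≤ (((k+3) * p^(2*(s-1)) : ℕ) : ℝ) := Nat.cast_le.mpr hmain
      _ = ((k:ℝ)+3) * (p:ℝ)^(2*(s-1)) := by push_cast; ring
      _ ≤ (((k:ℝ)+3) + (B:ℝ)^2) * (p:ℝ)^(2*(s-1)) := by
          refine mul_le_mul_of_nonneg_right ?_ hKpos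
          have : (0:ℝ) ≤ (B:ℝ)^2 := by positivity
          linarith
end
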